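/- arXiv:2312.02584 — 2 statements merged into one kernel-verified Lean document; each statement's English description precedes it below -/
import Mathlib

section
/- With notation as above: for $h$ in the open fundamental chamber $C$ and $i \in I$, the face of $\Xi_h = \operatorname{conv}(W\cdot h)$ cut out by the supporting hyperplane $H^{(i)} = \{h' : \langle \omega_i, h' \rangle = \langle \omega_i, h \rangle\}$ equals $F^{(i)} = \operatorname{conv}(W^{(i)} \cdot h)$, where $W^{(i)}$ is the standard subgroup of $W$ generated by all simple reflections except $s_i$. That is, $\Xi_h \cap H^{(i)} = \operatorname{conv}(W^{(i)} \cdot h)$. -/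
open scoped Pointwise

/-- The Coxeter matrix entry attached to a product `a_ij * a_ji` of entries of a
generalized Cartan matrix, via the standard table (`0` encodes `∞`). -/
def gcmCoxeterEntry (p : ℤ) : ℕ :=
  if p = 0 then 2 else if p = 1 then 3 else if p = 2 then 4 else if p = 3 then 6 else 0

/-- The Weyl group of a symmetrizable generalized Cartan matrix, together with its action
on the real Cartan subalgebra of a free and cofree Kac–Moody root datum. -/
structure KMWeyl (n : ℕ) (V : Type*) [AddCommGroup V] [Module ℝ V]
    (W : Type*) [Group W] (M : CoxeterMatrix (Fin n)) where
  /-- the generalized Cartan matrix -/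
  A : Matrix (Fin n) (Fin n) ℤ
  diag : ∀ i, A i i = 2
  offDiag : ∀ i j, i ≠ j → A i j ≤ 0
  zeroIff : ∀ i j, (A i j = 0 ↔ A j i = 0)
  symmetrizable : ∃ D B : Matrix (Fin n) (Fin n) ℝ, D.IsDiag ∧ B.IsSymm ∧
    A.map (Int.cast : ℤ → ℝ) = D * B
  coxMat : ∀ i j, i ≠ j → M i j = gcmCoxeterEntry (A i j * A j i)
  /-- the Coxeter system structure on the Weyl group -/
  cs : CoxeterSystem M W
  /-- the linear action of the Weyl group on the Cartan subalgebra -/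
  ρ : W →* (V →ₗ[ℝ] V)
  /-- the simple roots -/
  α : Fin n → (V →ₗ[ℝ] ℝ)
  /-- the simple coroots -/
  cor : Fin n → V
  pairing : ∀ i j, α j (cor i) = (A i j : ℝ)
  refl : ∀ i v, ρ (cs.simple i) v = v - α i v • cor i
  freeRoots : LinearIndependent ℝ α
  cofree : LinearIndependent ℝ cor

namespace KMWeyl

variable {n : ℕ} {V : Type*} [AddCommGroup V] [Module ℝ V]
  {W : Type*} [Group W] {M : CoxeterMatrix (Fin n)}

/-- The orbit of a point `h` under the Weyl group. -/
def orb (K : KMWeyl n V W M) (h : V) : Set V := Set.range fun w => K.ρ w h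

/-- The standard subgroup generated by the simple reflections indexed by `J`. -/
def std (K : KMWeyl n V W M) (J : Set (Fin n)) : Subgroup W :=
  Subgroup.closure (K.cs.simple '' J)

/-- The support of `w`: the indices occurring in every reduced word for `w`. -/
def supp (K : KMWeyl n V W M) (w : W) : Set (Fin n) :=
  {i | ∀ l : List (Fin n), K.cs.wordProd l = w → l.length = K.cs.length w → i ∈ l}

end KMWeyl

/-! For `w = w' sₖ` with `ℓ w = ℓ w' + 1` one has `h - w h = (h - w' h) + ⟨αₖ, h⟩ w' αₖ^∨`, and
`w' αₖ^∨` is a nonnegative combination of simple coroots by Tits' lemma. Hence `h - w h` lies in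
the positive coroot cone, so `ωᵢ ≤ ωᵢ h` on the orbit and the face of `Ξ_h` on `H^{(i)}` is the
convex hull of the orbit points lying on `H^{(i)}`. Since `⟨αₖ, h⟩ > 0`, equality `ωᵢ (w h) = ωᵢ h`
passes to `w'` and forces `ωᵢ (w' αₖ^∨) = 0`, which rules out `k = i` because `W^{(i)}` preserves
`ωᵢ`; by induction `w ∈ W^{(i)}`.

Tits' lemma is proved by induction on length through the decomposition `w = v u` with `u` in the
rank-two subgroup `⟨sⱼ, sₖ⟩` and `v` minimal in its coset; there `u αⱼ^∨` is computed explicitly and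
its coefficients are nonnegative as long as `u sⱼ` is reduced. -/

theorem convexHull_inter_hyperplane_of_le {E : Type*} [AddCommGroup E] [Module ℝ E]
    {s : Set E} {f : E →ₗ[ℝ] ℝ} {c : ℝ} (hs : ∀ x ∈ s, f x ≤ c) :
    convexHull ℝ s ∩ {x | f x = c} = convexHull ℝ (s ∩ {x | f x = c}) := by
  refine Set.Subset.antisymm ?_ (Set.subset_inter (convexHull_mono Set.inter_subset_left)
    (convexHull_min Set.inter_subset_right (convex_hyperplane f.isLinear c)))
  rintro _ ⟨hx, hfx⟩
  obtain ⟨ι, t, w, z, hw₀, hw₁, hz, rfl⟩ := (convexHull_eq s).subset hx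
  classical
  have hslack : ∑ a ∈ t, w a * (c - f (z a)) = 0 := by
    rw [Set.mem_ofPred_eq, Finset.centerMass_eq_of_sum_1 _ _ hw₁, map_sum] at hfx
    simp only [map_smul, smul_eq_mul] at hfx
    simp only [mul_sub, Finset.sum_sub_distrib, ← Finset.sum_mul, hw₁, one_mul, hfx, sub_self]
  have hface : ∀ a ∈ t, w a ≠ 0 → f (z a) = c := fun a ha hwa => by
    have := (Finset.sum_eq_zero_iff_of_nonneg fun b hb =>
      mul_nonneg (hw₀ b hb) (sub_nonneg.2 (hs _ (hz b hb)))).1 hslack a ha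
    linarith [(mul_eq_zero.1 this).resolve_left hwa]
  rw [← Finset.centerMass_filter_ne_zero]
  refine Finset.centerMass_mem_convexHull _ (fun a ha => hw₀ a (Finset.filter_subset _ _ ha))
    (by rw [Finset.sum_filter_ne_zero, hw₁]; exact one_pos) fun a ha => ?_
  obtain ⟨ha, hwa⟩ := Finset.mem_filter.1 ha
  exact ⟨hz a ha, hface a ha hwa⟩

namespace CoxeterSystem

variable {B W : Type*} [Group W] {M : CoxeterMatrix B} (cs : CoxeterSystem M W)

theorem induction_on_length_mul_simple {P : W → Prop} (one : P 1)
    (mul_simple : ∀ w i, cs.length (w * cs.simple i) = cs.length w + 1 → P w →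
      P (w * cs.simple i))
    (w : W) : P w := by
  induction hN : cs.length w using Nat.strong_induction_on generalizing w with
  | _ N ih =>
  rcases eq_or_ne w 1 with rfl | hw
  · exact one
  obtain ⟨i, hi⟩ := cs.exists_rightDescent_of_ne_one hw
  have hlen : cs.length (w * cs.simple i * cs.simple i) = cs.length (w * cs.simple i) + 1 := by
    rw [cs.simple_mul_simple_cancel_right]
    exact (cs.length_mul_simple w i).resolve_left (by unfold IsRightDescent at hi; omega) |>.symm
  simpa [cs.simple_mul_simple_cancel_right] using
    mul_simple _ i hlen (ih _ (hN ▸ hi) _ rfl)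

theorem exists_eq_mul_alternatingWord (j k : B) (w : W)
    (hj : cs.length (w * cs.simple j) = cs.length w + 1) :
    ∃ v t, w = v * cs.wordProd (alternatingWord j k t) ∧ cs.length v + t = cs.length w ∧
      cs.length (v * cs.simple j) = cs.length v + 1 ∧
      cs.length (v * cs.simple k) = cs.length v + 1 := by
  induction hN : cs.length w using Nat.strong_induction_on generalizing w j k with
  | _ N ih =>
  rcases cs.length_mul_simple w k with hk | hk
  · exact ⟨w, 0, by simp [alternatingWord], by simpa using hN, hj, hk⟩
  have hk' : cs.length (w * cs.simple k * cs.simple k) = cs.length (w * cs.simple k) + 1 := by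
    rw [cs.simple_mul_simple_cancel_right]; omega
  obtain ⟨v, t, hw, hlen, hvk, hvj⟩ := ih _ (by omega) k j _ hk' rfl
  refine ⟨v, t + 1, ?_, by omega, hvj, hvk⟩
  rw [alternatingWord_succ, wordProd_concat, ← mul_assoc, ← hw,
    cs.simple_mul_simple_cancel_right]

theorem coxeter_eq_zero_or_succ_le_of_eq_mul_alternatingWord {j k : B} {w v : W} {t : ℕ}
    (hw : w = v * cs.wordProd (alternatingWord j k t)) (hlen : cs.length v + t = cs.length w)
    (hj : cs.length (w * cs.simple j) = cs.length w + 1) :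
    M k j = 0 ∨ t + 1 ≤ M k j := by
  by_contra! hM
  refine cs.not_isReduced_alternatingWord k j (m := t + 1) hM.1 hM.2 ?_
  have hlower : cs.length (w * cs.simple j) ≤
      cs.length v + cs.length (cs.wordProd (alternatingWord k j (t + 1))) := by
    rw [alternatingWord_succ, wordProd_concat, hw, mul_assoc]
    exact cs.length_mul_le _ _
  have hupper := cs.length_wordProd_le (alternatingWord k j (t + 1))
  unfold IsReduced
  rw [length_alternatingWord] at hupper ⊢
  omega

end CoxeterSystem

/-- `dihedralCoeff p t = (x, y)` records `x αⱼ^∨ + y (-aⱼₖ) αₖ^∨`, the image of `αⱼ^∨` under the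
alternating product `⋯ sⱼ sₖ` of length `t`, where `p = aⱼₖ aₖⱼ`. -/
def dihedralCoeff (p : ℤ) : ℕ → ℤ × ℤ
  | 0 => (1, 0)
  | t + 1 =>
    if Even t then ((dihedralCoeff p t).1, (dihedralCoeff p t).1 - (dihedralCoeff p t).2)
    else (p * (dihedralCoeff p t).2 - (dihedralCoeff p t).1, (dihedralCoeff p t).2)

theorem dihedralCoeff_nonneg_of_four_le {p : ℤ} (hp : 4 ≤ p) (t : ℕ) :
    0 ≤ (dihedralCoeff p t).1 ∧ 0 ≤ (dihedralCoeff p t).2 ∧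
      (Even t → 2 * (dihedralCoeff p t).2 ≤ (dihedralCoeff p t).1) ∧
      (¬Even t → (dihedralCoeff p t).1 ≤ 2 * (dihedralCoeff p t).2) := by
  induction t with
  | zero => simp [dihedralCoeff]
  | succ t ih =>
    obtain ⟨hx, hy, hev, hodd⟩ := ih
    by_cases ht : Even t
    · have := hev ht
      simp only [dihedralCoeff, Nat.even_add_one, ht, if_true, not_true, false_imp_iff,
        true_and, not_false_eq_true, forall_const]
      refine ⟨?_, ?_, ?_⟩ <;> linarith
    · have := hodd ht
      simp only [dihedralCoeff, Nat.even_add_one, ht, if_false, not_false_eq_true,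
        forall_const, not_true, false_imp_iff, and_true]
      refine ⟨?_, ?_, ?_⟩ <;> nlinarith

theorem dihedralCoeff_nonneg {p : ℤ} (hp : 0 ≤ p) {t : ℕ}
    (ht : gcmCoxeterEntry p = 0 ∨ t + 1 ≤ gcmCoxeterEntry p) :
    0 ≤ (dihedralCoeff p t).1 ∧ 0 ≤ (dihedralCoeff p t).2 := by
  by_cases h4 : 4 ≤ p
  · obtain ⟨hx, hy, -⟩ := dihedralCoeff_nonneg_of_four_le h4 t
    exact ⟨hx, hy⟩
  obtain rfl | rfl | rfl | rfl : p = 0 ∨ p = 1 ∨ p = 2 ∨ p = 3 := by omega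
  all_goals
    simp only [gcmCoxeterEntry] at ht
    norm_num at ht
  · interval_cases t <;> decide
  · interval_cases t <;> decide
  · interval_cases t <;> decide
  · interval_cases t <;> decide

namespace KMWeyl

open CoxeterSystem

variable {n : ℕ} {V : Type*} [AddCommGroup V] [Module ℝ V]
  {W : Type*} [Group W] {M : CoxeterMatrix (Fin n)} (K : KMWeyl n V W M)

def corootCone : PointedCone ℝ V := PointedCone.hull ℝ (Set.range K.cor)

theorem cor_mem_corootCone (j : Fin n) : K.cor j ∈ K.corootCone :=
  PointedCone.subset_hull ⟨j, rfl⟩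

theorem rho_mul_simple_apply (w : W) (k : Fin n) (v : V) :
    K.ρ (w * K.cs.simple k) v = K.ρ w v - K.α k v • K.ρ w (K.cor k) := by
  rw [map_mul, Module.End.mul_apply, K.refl, map_sub, map_smul]

theorem rho_alternatingWord_cor (j k : Fin n) (t : ℕ) :
    K.ρ (K.cs.wordProd (alternatingWord j k t)) (K.cor j) =
      ((dihedralCoeff (K.A j k * K.A k j) t).1 : ℝ) • K.cor j +
        ((-K.A j k * (dihedralCoeff (K.A j k * K.A k j) t).2 : ℤ) : ℝ) • K.cor k := by
  induction t with
  | zero => simp [dihedralCoeff, alternatingWord]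
  | succ t ih =>
    rw [alternatingWord_succ', K.cs.wordProd_cons, map_mul, Module.End.mul_apply, ih, map_add,
      map_smul, map_smul]
    by_cases ht : Even t <;>
    · simp only [ht, if_true, if_false, K.refl, K.pairing, K.diag, dihedralCoeff]
      push_cast
      module

theorem exists_rho_alternatingWord_cor_eq {j k : Fin n} (hjk : j ≠ k) {t : ℕ}
    (ht : M k j = 0 ∨ t + 1 ≤ M k j) :
    ∃ a b : ℝ, 0 ≤ a ∧ 0 ≤ b ∧
      K.ρ (K.cs.wordProd (alternatingWord j k t)) (K.cor j) = a • K.cor j + b • K.cor k := by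
  have hjk' := K.offDiag j k hjk
  have hp : 0 ≤ K.A j k * K.A k j := mul_nonneg_of_nonpos_of_nonpos hjk' (K.offDiag k j hjk.symm)
  rw [K.coxMat k j hjk.symm, mul_comm] at ht
  obtain ⟨hx, hy⟩ := dihedralCoeff_nonneg hp ht
  exact ⟨_, _, by exact_mod_cast hx, by exact_mod_cast mul_nonneg (neg_nonneg.2 hjk') hy,
    K.rho_alternatingWord_cor j k t⟩

/-- Tits' lemma. -/
theorem rho_cor_mem_corootCone {w : W} {j : Fin n}
    (hw : K.cs.length (w * K.cs.simple j) = K.cs.length w + 1) :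
    K.ρ w (K.cor j) ∈ K.corootCone := by
  induction hN : K.cs.length w using Nat.strong_induction_on generalizing w j with
  | _ N ih =>
  rcases eq_or_ne w 1 with rfl | hw1
  · simpa using K.cor_mem_corootCone j
  obtain ⟨k, hk⟩ := K.cs.exists_rightDescent_of_ne_one hw1
  have hkj : k ≠ j := by rintro rfl; unfold IsRightDescent at hk; omega
  obtain ⟨v, t, rfl, hlen, hvj, hvk⟩ := K.cs.exists_eq_mul_alternatingWord j k w hw
  have ht : t ≠ 0 := by
    rintro rfl
    simp only [alternatingWord, wordProd_nil, mul_one] at hk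
    unfold IsRightDescent at hk
    omega
  obtain ⟨a, b, ha, hb, hab⟩ := K.exists_rho_alternatingWord_cor_eq hkj.symm
    (K.cs.coxeter_eq_zero_or_succ_le_of_eq_mul_alternatingWord rfl hlen hw)
  rw [map_mul, Module.End.mul_apply, hab, map_add, map_smul, map_smul]
  exact add_mem (K.corootCone.smul_mem ha (ih _ (by omega) hvj rfl))
    (K.corootCone.smul_mem hb (ih _ (by omega) hvk rfl))

theorem sub_rho_mem_corootCone {h : V} (hC : ∀ k, 0 ≤ K.α k h) (w : W) :
    h - K.ρ w h ∈ K.corootCone := by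
  induction w using K.cs.induction_on_length_mul_simple with
  | one => simp
  | mul_simple w k hk ih =>
    rw [K.rho_mul_simple_apply, sub_sub_eq_add_sub, add_sub_right_comm]
    exact add_mem ih (K.corootCone.smul_mem (hC k) (K.rho_cor_mem_corootCone hk))

section Coweights

variable {ω : Fin n → (V →ₗ[ℝ] ℝ)} (hω : ∀ i j, ω i (K.cor j) = if i = j then 1 else 0)
include hω

theorem omega_nonneg_of_mem_corootCone {v : V} (hv : v ∈ K.corootCone) (i : Fin n) :
    0 ≤ ω i v := by
  have : K.corootCone ≤ (PointedCone.positive ℝ ℝ).comap (ω i) := by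
    refine Submodule.span_le.2 ?_
    rintro _ ⟨j, rfl⟩
    change 0 ≤ ω i (K.cor j)
    rw [hω]
    split_ifs <;> norm_num
  exact this hv

theorem omega_rho_le {h : V} (hC : ∀ k, 0 ≤ K.α k h) (w : W) (i : Fin n) :
    ω i (K.ρ w h) ≤ ω i h := by
  have := K.omega_nonneg_of_mem_corootCone hω (K.sub_rho_mem_corootCone hC w) i
  rwa [map_sub, sub_nonneg] at this

theorem omega_rho_of_mem_std {i : Fin n} {w : W} (hw : w ∈ K.std {j | j ≠ i}) (x : V) :
    ω i (K.ρ w x) = ω i x := by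
  induction hw using Subgroup.closure_induction generalizing x with
  | mem _ hg =>
    obtain ⟨j, hji, rfl⟩ := hg
    simp [K.refl, hω, Ne.symm hji]
  | one => simp
  | mul g g' _ _ ihg ihg' => rw [map_mul, Module.End.mul_apply, ihg, ihg']
  | inv g _ ihg => rw [← ihg, ← Module.End.mul_apply, ← map_mul, mul_inv_cancel, map_one,
      Module.End.one_apply]

theorem mem_std_of_omega_rho_eq {h : V} (hC : ∀ k, 0 < K.α k h) {i : Fin n} {w : W}
    (hw : ω i (K.ρ w h) = ω i h) : w ∈ K.std {j | j ≠ i} := by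
  induction w using K.cs.induction_on_length_mul_simple with
  | one => exact one_mem _
  | mul_simple w k hk ih =>
    rw [K.rho_mul_simple_apply, map_sub, map_smul, smul_eq_mul] at hw
    have hle := K.omega_rho_le hω (fun k => (hC k).le) w i
    have hpos := K.omega_nonneg_of_mem_corootCone hω (K.rho_cor_mem_corootCone hk) i
    have hcor : ω i (K.ρ w (K.cor k)) = 0 := by nlinarith [hC k]
    have hw' : w ∈ K.std {j | j ≠ i} := ih (by nlinarith [hC k])
    have hki : k ≠ i := by
      rintro rfl
      rw [K.omega_rho_of_mem_std hω hw', hω, if_pos rfl] at hcor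
      exact one_ne_zero hcor
    exact mul_mem hw' (Subgroup.subset_closure ⟨k, hki, rfl⟩)

end Coweights

end KMWeyl

/-- The facet of `Ξ_h` cut out by the supporting hyperplane `H^{(i)}` is the convex hull of
the `W^{(i)}`-orbit of `h`. -/
theorem stmt_3 {n : ℕ} {V : Type*} [AddCommGroup V] [Module ℝ V]
    {W : Type*} [Group W] {M : CoxeterMatrix (Fin n)} (K : KMWeyl n V W M)
    (h : V) (hC : ∀ i, 0 < K.α i h)
    (ω : Fin n → (V →ₗ[ℝ] ℝ)) (hω : ∀ i j, ω i (K.cor j) = if i = j then 1 else 0)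
    (i : Fin n) :
    convexHull ℝ (K.orb h) ∩ {x | ω i x = ω i h} =
      convexHull ℝ ((fun w => K.ρ w h) '' (K.std {j | j ≠ i} : Set W)) := by
  have hle : ∀ x ∈ K.orb h, ω i x ≤ ω i h := by
    rintro _ ⟨w, rfl⟩
    exact K.omega_rho_le hω (fun k => (hC k).le) w i
  rw [convexHull_inter_hyperplane_of_le hle]
  congr 1
  ext x
  constructor
  · rintro ⟨⟨w, rfl⟩, hw⟩
    exact ⟨w, K.mem_std_of_omega_rho_eq hω hC hw, rfl⟩
  · rintro ⟨w, hw, rfl⟩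
    exact ⟨⟨w, rfl⟩, K.omega_rho_of_mem_std hω hw h⟩
end

section
/- With notation as above: let $h \in C$ and suppose $G = \operatorname{conv}(W' \cdot h)$ is a proper exposed face of $\Xi_h = \operatorname{conv}(W \cdot h)$ containing $h$ (so $1 \in W' \subseteq W$). Then there exists some $i \in I$ such that $W' \subseteq W^{(i)}$, the standard subgroup generated by all simple reflections except $s_i$. -/
/-!
Let `f` be a functional exposing `G`, so `f` attains its maximum over `Ξ_h` at `h`. Since
`f (s_k h) = f h - α_k(h) f(α_k^∨)` with `α_k(h) > 0`, every `f(α_k^∨)` is nonnegative. If all of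
them vanish, `f` is `W`-invariant, hence constant on `Ξ_h`, and `G` would not be proper. Otherwise
`f(α_i^∨) > 0` for some `i`. For `w ∈ W'` we have `f (h - w h) = 0`, while `h - w h` is a
nonnegative combination of coroots whose coefficient at every letter of a reduced word for `w` is
positive; so `s_i` does not occur in `w`, i.e. `w ∈ W^{(i)}`.

That coefficient is positive because `α_k(u h) > 0` whenever `s_k` is not a left descent of `u`,
i.e. `u⁻¹ α_k` is a positive root. Positivity of roots is proved by reduction to the rank-two
parabolic subgroups `⟨s_i, s_j⟩`, where the roots are computed explicitly.
-/

open scoped Pointwise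

namespace CoxeterSystem

variable {B W : Type*} [Group W] {M : CoxeterMatrix B} (cs : CoxeterSystem M W)

theorem exists_pairWord_mul_not_isLeftDescent (i j : B) (w : W) :
    ∃ (l : List B) (v : W), (∀ k ∈ l, k = i ∨ k = j) ∧ w = cs.wordProd l * v ∧
      cs.length w = l.length + cs.length v ∧
      ¬ cs.IsLeftDescent v i ∧ ¬ cs.IsLeftDescent v j := by
  induction hN : cs.length w using Nat.strong_induction_on generalizing w with
  | _ N ih =>
    by_cases hd : ∀ k, k = i ∨ k = j → ¬ cs.IsLeftDescent w k
    · exact ⟨[], w, by simp, by simp, by simp [hN], hd i (Or.inl rfl), hd j (Or.inr rfl)⟩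
    · push Not at hd
      obtain ⟨k, hk, hdk⟩ := hd
      have hlen := cs.isLeftDescent_iff.mp hdk
      obtain ⟨l, v, hl, hw, hlen', hvi, hvj⟩ := ih _ (by omega) (cs.simple k * w) rfl
      refine ⟨k :: l, v, ?_, ?_, ?_, hvi, hvj⟩
      · simpa [List.forall_mem_cons] using ⟨hk, hl⟩
      · rw [cs.wordProd_cons, mul_assoc, ← hw, cs.simple_mul_simple_cancel_left]
      · simp only [List.length_cons]; omega

theorem not_isReduced_cons_cons_self (i : B) (l : List B) :
    ¬ cs.IsReduced (i :: i :: l) := by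
  intro hred
  have := cs.length_wordProd_le l
  rw [IsReduced, cs.wordProd_cons, cs.wordProd_cons, cs.simple_mul_simple_cancel_left] at hred
  simp only [List.length_cons] at hred
  omega

theorem eq_reverse_alternatingWord_of_isReduced_cons {i j : B} {l : List B}
    (hl : ∀ k ∈ l, k = i ∨ k = j) (hred : cs.IsReduced (i :: l)) :
    l = (alternatingWord i j l.length).reverse := by
  induction l generalizing i j with
  | nil => rfl
  | cons c t ih =>
    obtain rfl : c = j := by
      rcases hl c List.mem_cons_self with rfl | hc
      · exact absurd hred (cs.not_isReduced_cons_cons_self c t)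
      · exact hc
    have ht : t = (alternatingWord c i t.length).reverse :=
      ih (fun k hk => (hl k (List.mem_cons_of_mem c hk)).symm) (by simpa using hred.drop 1)
    rw [List.length_cons, alternatingWord_succ, List.concat_eq_append, List.reverse_append, ← ht]
    rfl

theorem isReduced_cons_of_not_isLeftDescent {i : B} {l : List B} {v : W}
    (hlen : cs.length (cs.wordProd l * v) = l.length + cs.length v)
    (hi : ¬ cs.IsLeftDescent (cs.wordProd l * v) i) : cs.IsReduced (i :: l) := by
  have hsucc := cs.not_isLeftDescent_iff.mp hi
  have hle := cs.length_mul_le (cs.wordProd (i :: l)) v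
  have hword := cs.length_wordProd_le (i :: l)
  rw [cs.wordProd_cons, mul_assoc] at hle
  rw [cs.wordProd_cons] at hword
  rw [IsReduced, cs.wordProd_cons]
  simp only [List.length_cons] at hword ⊢
  omega

theorem eq_zero_or_le_of_isReduced_alternatingWord {i j : B} {m : ℕ}
    (hred : cs.IsReduced (alternatingWord i j m)) : M i j = 0 ∨ m ≤ M i j := by
  by_contra! h
  exact cs.not_isReduced_alternatingWord i j h.1 h.2 hred

theorem wordProd_mem_closure_simple_image {J : Set B} {l : List B} (hl : ∀ k ∈ l, k ∈ J) :
    cs.wordProd l ∈ Subgroup.closure (cs.simple '' J) := by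
  induction l with
  | nil => exact one_mem _
  | cons k t ih =>
    rw [cs.wordProd_cons]
    exact mul_mem (Subgroup.subset_closure ⟨k, hl k List.mem_cons_self, rfl⟩)
      (ih fun m hm => hl m (List.mem_cons_of_mem k hm))

end CoxeterSystem

/-- `rankTwoCoeff (A i j) (A j i) r = (p, q)` means `α_i ∘ s_j s_i s_j ⋯ = p α_i + q α_j`
(`r` factors); see `KMWeyl.alpha_comp_rho_alternatingWord`. -/
def rankTwoCoeff (a b : ℤ) : ℕ → ℤ × ℤ
  | 0 => (1, 0)
  | r + 1 =>
    let c := rankTwoCoeff a b r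
    if Even r then (c.1, -b * c.1 - c.2) else (-a * c.2 - c.1, c.2)

theorem rankTwoCoeff_succ_of_even (a b : ℤ) {r : ℕ} (hr : Even r) :
    rankTwoCoeff a b (r + 1) =
      ((rankTwoCoeff a b r).1, -b * (rankTwoCoeff a b r).1 - (rankTwoCoeff a b r).2) := by
  simp [rankTwoCoeff, hr]

theorem rankTwoCoeff_succ_of_not_even (a b : ℤ) {r : ℕ} (hr : ¬ Even r) :
    rankTwoCoeff a b (r + 1) =
      (-a * (rankTwoCoeff a b r).2 - (rankTwoCoeff a b r).1, (rankTwoCoeff a b r).2) := by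
  simp [rankTwoCoeff, hr]

theorem rankTwoCoeff_nonneg_of_four_le {a b : ℤ} (ha : a ≤ 0) (hb : b ≤ 0) (hab : 4 ≤ a * b)
    (r : ℕ) : 0 ≤ (rankTwoCoeff a b r).1 ∧ 0 ≤ (rankTwoCoeff a b r).2 := by
  suffices h : 0 ≤ (rankTwoCoeff a b r).1 ∧ 0 ≤ (rankTwoCoeff a b r).2 ∧
      (Even r → 2 * (rankTwoCoeff a b r).2 ≤ -b * (rankTwoCoeff a b r).1) ∧
      (¬ Even r → 2 * (rankTwoCoeff a b r).1 ≤ -a * (rankTwoCoeff a b r).2) from ⟨h.1, h.2.1⟩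
  induction r with
  | zero => simp [rankTwoCoeff, hb]
  | succ r ih =>
    obtain ⟨hp, hq, hev, hodd⟩ := ih
    by_cases hr : Even r
    · have := hev hr
      rw [rankTwoCoeff_succ_of_even a b hr]
      refine ⟨hp, by nlinarith, fun h => absurd hr (Nat.even_add_one.mp h), fun _ => ?_⟩
      nlinarith
    · have := hodd hr
      rw [rankTwoCoeff_succ_of_not_even a b hr]
      refine ⟨by nlinarith, hq, fun _ => by nlinarith, fun h => absurd (Nat.even_add_one.mpr hr) h⟩

theorem rankTwoCoeff_nonneg {a b : ℤ} (ha : a ≤ 0) (hb : b ≤ 0) {r : ℕ}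
    (hr : gcmCoxeterEntry (a * b) = 0 ∨ r + 1 ≤ gcmCoxeterEntry (a * b)) :
    0 ≤ (rankTwoCoeff a b r).1 ∧ 0 ≤ (rankTwoCoeff a b r).2 := by
  by_cases hab : 4 ≤ a * b
  · exact rankTwoCoeff_nonneg_of_four_le ha hb hab r
  have hab' : a * b = 0 ∨ a * b = 1 ∨ a * b = 2 ∨ a * b = 3 := by
    have : 0 ≤ a * b := mul_nonneg_of_nonpos_of_nonpos ha hb
    omega
  rcases hab' with h | h | h | h <;> simp only [h, gcmCoxeterEntry] at hr <;> norm_num at hr <;>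
    interval_cases r <;> refine ⟨?_, ?_⟩ <;> simp only [rankTwoCoeff, Nat.even_iff] <;> norm_num <;>
    nlinarith [h, congrArg (fun t => t * t) h]

theorem PointedCone.eq_zero_or_pos_of_mem_hull_range {ι V : Type*} [AddCommGroup V]
    [Module ℝ V] {α : ι → V →ₗ[ℝ] ℝ} {φ : V →ₗ[ℝ] ℝ}
    (hφ : φ ∈ PointedCone.hull ℝ (Set.range α)) {h : V} (hα : ∀ i, 0 < α i h) :
    φ = 0 ∨ 0 < φ h := by
  induction hφ using Submodule.span_induction with
  | mem x hx =>
    obtain ⟨i, rfl⟩ := hx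
    exact Or.inr (hα i)
  | zero => exact Or.inl rfl
  | add x y _ _ hx hy =>
    rcases hx with rfl | hx
    · simpa using hy
    rcases hy with rfl | hy
    · simpa using Or.inr hx
    · exact Or.inr (by simpa using add_pos hx hy)
  | smul a x _ hx =>
    obtain ⟨a, ha⟩ := a
    rcases ha.eq_or_lt with rfl | ha
    · exact Or.inl (by ext; simp [← Nonneg.coe_smul])
    rcases hx with rfl | hx
    · simp
    · exact Or.inr (by simpa [← Nonneg.coe_smul] using mul_pos ha hx)

namespace KMWeyl

variable {n : ℕ} {V : Type*} [AddCommGroup V] [Module ℝ V]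
  {W : Type*} [Group W] {M : CoxeterMatrix (Fin n)} (K : KMWeyl n V W M)

open CoxeterSystem

theorem comp_rho_simple (μ : V →ₗ[ℝ] ℝ) (k : Fin n) :
    μ ∘ₗ K.ρ (K.cs.simple k) = μ - μ (K.cor k) • K.α k := by
  ext v
  simp [K.refl k v, mul_comm]

theorem alpha_comp_rho_alternatingWord (i j : Fin n) (r : ℕ) :
    K.α i ∘ₗ K.ρ (K.cs.wordProd (alternatingWord i j r).reverse) =
      ((rankTwoCoeff (K.A i j) (K.A j i) r).1 : ℝ) • K.α i +
        ((rankTwoCoeff (K.A i j) (K.A j i) r).2 : ℝ) • K.α j := by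
  induction r with
  | zero => ext; simp [alternatingWord, rankTwoCoeff]
  | succ r ih =>
    rw [alternatingWord_succ', List.reverse_cons, K.cs.wordProd_append, K.cs.wordProd_singleton,
      map_mul, Module.End.mul_eq_comp, ← LinearMap.comp_assoc, ih, LinearMap.add_comp,
      LinearMap.smul_comp, LinearMap.smul_comp, comp_rho_simple, comp_rho_simple]
    split_ifs with hr
    · rw [rankTwoCoeff_succ_of_even _ _ hr]
      simp only [K.pairing, K.diag]
      push_cast
      module
    · rw [rankTwoCoeff_succ_of_not_even _ _ hr]
      simp only [K.pairing, K.diag]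
      push_cast
      module

theorem exists_alpha_comp_rho_wordProd_eq {i j : Fin n} (hij : i ≠ j) {l : List (Fin n)}
    (hl : ∀ k ∈ l, k = i ∨ k = j) (hred : K.cs.IsReduced (i :: l)) :
    ∃ P Q : ℝ, 0 ≤ P ∧ 0 ≤ Q ∧ K.α i ∘ₗ K.ρ (K.cs.wordProd l) = P • K.α i + Q • K.α j := by
  have hl' := K.cs.eq_reverse_alternatingWord_of_isReduced_cons hl hred
  have hbound : M j i = 0 ∨ l.length + 1 ≤ M j i := by
    apply K.cs.eq_zero_or_le_of_isReduced_alternatingWord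
    rw [← K.cs.isReduced_reverse_iff, alternatingWord_succ, List.concat_eq_append,
      List.reverse_append, ← hl']
    exact hred
  have hM : M j i = gcmCoxeterEntry (K.A i j * K.A j i) := by
    rw [K.coxMat j i hij.symm, mul_comm]
  obtain ⟨hP, hQ⟩ := rankTwoCoeff_nonneg (K.offDiag i j hij) (K.offDiag j i hij.symm) (hM ▸ hbound)
  refine ⟨(rankTwoCoeff (K.A i j) (K.A j i) l.length).1,
    (rankTwoCoeff (K.A i j) (K.A j i) l.length).2, by exact_mod_cast hP, by exact_mod_cast hQ, ?_⟩
  conv_lhs => rw [hl']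
  exact K.alpha_comp_rho_alternatingWord i j l.length

theorem alpha_comp_rho_mem_hull {u : W} {i : Fin n} (hu : ¬ K.cs.IsLeftDescent u i) :
    K.α i ∘ₗ K.ρ u ∈ PointedCone.hull ℝ (Set.range K.α) := by
  induction hN : K.cs.length u using Nat.strong_induction_on generalizing u i with
  | _ N ih =>
    by_cases hu1 : u = 1
    · rw [hu1, map_one, Module.End.one_eq_id, LinearMap.comp_id]
      exact PointedCone.subset_hull (Set.mem_range_self i)
    obtain ⟨j, hj⟩ := K.cs.exists_leftDescent_of_ne_one hu1
    have hij : i ≠ j := fun h => hu (h ▸ hj)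
    obtain ⟨l, v, hl, rfl, hlen, hvi, hvj⟩ :=
      K.cs.exists_pairWord_mul_not_isLeftDescent i j u
    have hl_ne : l ≠ [] := by
      rintro rfl
      rw [K.cs.wordProd_nil, one_mul] at hj
      exact hvj hj
    have hv : K.cs.length v < N := by
      have := List.length_pos_iff.mpr hl_ne
      omega
    obtain ⟨P, Q, hP, hQ, hPQ⟩ := K.exists_alpha_comp_rho_wordProd_eq hij hl
      (K.cs.isReduced_cons_of_not_isLeftDescent hlen hu)
    rw [map_mul, Module.End.mul_eq_comp, ← LinearMap.comp_assoc, hPQ, LinearMap.add_comp,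
      LinearMap.smul_comp, LinearMap.smul_comp]
    exact add_mem (PointedCone.smul_mem _ hP (ih _ hv hvi rfl))
      (PointedCone.smul_mem _ hQ (ih _ hv hvj rfl))

theorem alpha_comp_rho_ne_zero (u : W) (i : Fin n) : K.α i ∘ₗ K.ρ u ≠ 0 := by
  intro h0
  have := LinearMap.congr_fun h0 (K.ρ u⁻¹ (K.cor i))
  rw [LinearMap.comp_apply, ← Module.End.mul_apply, ← map_mul, mul_inv_cancel, map_one,
    Module.End.one_apply, K.pairing, K.diag] at this
  norm_num at this

theorem alpha_rho_pos {h : V} (hC : ∀ i, 0 < K.α i h) {u : W} {i : Fin n}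
    (hu : ¬ K.cs.IsLeftDescent u i) : 0 < K.α i (K.ρ u h) :=
  ((PointedCone.eq_zero_or_pos_of_mem_hull_range (K.alpha_comp_rho_mem_hull hu) hC).resolve_left
    (K.alpha_comp_rho_ne_zero u i))

theorem exists_sub_rho_wordProd_eq_sum {h : V} (hC : ∀ i, 0 < K.α i h) {l : List (Fin n)}
    (hl : K.cs.IsReduced l) :
    ∃ c : Fin n → ℝ, (∀ k, 0 ≤ c k) ∧ (∀ k ∈ l, 0 < c k) ∧
      h - K.ρ (K.cs.wordProd l) h = ∑ k, c k • K.cor k := by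
  induction l with
  | nil => exact ⟨0, fun _ => le_rfl, by simp, by simp⟩
  | cons k t ih =>
    have ht : K.cs.IsReduced t := by simpa using hl.drop 1
    obtain ⟨c, hc, hct, hsum⟩ := ih ht
    have hk : ¬ K.cs.IsLeftDescent (K.cs.wordProd t) k := by
      rw [K.cs.not_isLeftDescent_iff, ← K.cs.wordProd_cons, hl, ht]
      rfl
    set ε := K.α k (K.ρ (K.cs.wordProd t) h)
    have hε : 0 < ε := K.alpha_rho_pos hC hk
    have hs : ∀ m, 0 ≤ if m = k then ε else 0 := fun m => by split_ifs <;> simp [hε.le]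
    refine ⟨fun m => c m + if m = k then ε else 0, fun m => add_nonneg (hc m) (hs m),
      fun m hm => ?_, ?_⟩
    · rcases List.mem_cons.mp hm with rfl | hm
      · simpa using add_pos_of_nonneg_of_pos (hc m) hε
      · exact add_pos_of_pos_of_nonneg (hct m hm) (hs m)
    · simp only [add_smul, Finset.sum_add_distrib, ← hsum, ite_smul, zero_smul,
        Finset.sum_ite_eq', Finset.mem_univ, if_true, K.cs.wordProd_cons, map_mul,
        Module.End.mul_apply, K.refl]
      abel

theorem comp_rho_eq_self {f : V →ₗ[ℝ] ℝ} (hf : ∀ k, f (K.cor k) = 0) (w : W) :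
    f ∘ₗ K.ρ w = f :=
  K.cs.simple_induction_left (p := fun w => f ∘ₗ K.ρ w = f) w (by simp [Module.End.one_eq_id])
    fun w k hw => by
    rw [map_mul, Module.End.mul_eq_comp, ← LinearMap.comp_assoc, comp_rho_simple, hf, zero_smul,
      sub_zero, hw]

theorem mem_std_of_apply_rho_eq {h : V} (hC : ∀ i, 0 < K.α i h) {f : V →ₗ[ℝ] ℝ}
    (hf : ∀ k, 0 ≤ f (K.cor k)) {i : Fin n} (hi : 0 < f (K.cor i)) {w : W}
    (hw : f (K.ρ w h) = f h) : w ∈ K.std {j | j ≠ i} := by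
  obtain ⟨l, hl, rfl⟩ := K.cs.exists_isReduced w
  obtain ⟨c, hc, hcl, hsum⟩ := K.exists_sub_rho_wordProd_eq_sum hC hl
  have hzero : ∑ k, c k * f (K.cor k) = 0 := by
    simpa [hw] using (congrArg f hsum).symm
  have hci : c i = 0 := by
    have := (Finset.sum_eq_zero_iff_of_nonneg fun k _ => mul_nonneg (hc k) (hf k)).mp hzero i
      (Finset.mem_univ i)
    exact (mul_eq_zero.mp this).resolve_right hi.ne'
  exact K.cs.wordProd_mem_closure_simple_image fun k hk hki => (hcl k hk).ne' (hki ▸ hci)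

end KMWeyl

theorem stmt_7_general {n : ℕ} {V : Type*} [NormedAddCommGroup V] [NormedSpace ℝ V]
    {W : Type*} [Group W] {M : CoxeterMatrix (Fin n)} (K : KMWeyl n V W M)
    (h : V) (hC : ∀ i, 0 < K.α i h)
    (W' : Set W) (hone : (1 : W) ∈ W')
    (G : Set V) (hG : G = convexHull ℝ ((fun w => K.ρ w h) '' W'))
    (hexp : IsExposed ℝ (convexHull ℝ (K.orb h)) G)
    (hproper : G ≠ convexHull ℝ (K.orb h)) :
    ∃ i : Fin n, W' ⊆ (K.std {j | j ≠ i} : Set W) := by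
  have hhG : h ∈ G := hG ▸ subset_convexHull ℝ _ ⟨1, hone, by simp⟩
  obtain ⟨f, hGf⟩ := hexp ⟨h, hhG⟩
  rw [hGf] at hhG
  have horb : ∀ w, K.ρ w h ∈ convexHull ℝ (K.orb h) := fun w => subset_convexHull ℝ _ ⟨w, rfl⟩
  have hmax : ∀ w, f (K.ρ w h) ≤ f h := fun w => hhG.2 _ (horb w)
  have hf : ∀ k, 0 ≤ f (K.cor k) := fun k => by
    have := hmax (K.cs.simple k)
    rw [K.refl, map_sub, map_smul, smul_eq_mul] at this
    nlinarith [hC k]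
  by_cases hpos : ∃ i, 0 < f (K.cor i)
  · obtain ⟨i, hi⟩ := hpos
    refine ⟨i, fun w hw => K.mem_std_of_apply_rho_eq hC (f := (f : V →ₗ[ℝ] ℝ)) hf hi ?_⟩
    have hwG : K.ρ w h ∈ G := hG ▸ subset_convexHull ℝ _ ⟨w, hw, rfl⟩
    rw [hGf] at hwG
    exact le_antisymm (hmax w) (hwG.2 h hhG.1)
  · push Not at hpos
    have hinv := K.comp_rho_eq_self (f := (f : V →ₗ[ℝ] ℝ)) fun k => le_antisymm (hpos k) (hf k)
    have hconst : ∀ x ∈ convexHull ℝ (K.orb h), f x = f h := fun x hx =>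
      convexHull_min (t := {x | f x = f h})
        (by rintro _ ⟨w, rfl⟩; exact LinearMap.congr_fun (hinv w) h)
        (convex_hyperplane f.toLinearMap.isLinear _) hx
    exact absurd (by rw [hGf]; ext x; simp +contextual [hconst]) hproper

/-- A proper exposed face of `Ξ_h` containing `h` has its defining set of Weyl group
elements contained in some maximal standard subgroup `W^{(i)}`. -/
theorem stmt_7 {n : ℕ} {V : Type*} [NormedAddCommGroup V] [NormedSpace ℝ V]
    [FiniteDimensional ℝ V]
    {W : Type*} [Group W] {M : CoxeterMatrix (Fin n)} (K : KMWeyl n V W M)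
    (h : V) (hC : ∀ i, 0 < K.α i h)
    (W' : Set W) (hone : (1 : W) ∈ W')
    (G : Set V) (hG : G = convexHull ℝ ((fun w => K.ρ w h) '' W'))
    (hexp : IsExposed ℝ (convexHull ℝ (K.orb h)) G)
    (hproper : G ≠ convexHull ℝ (K.orb h)) :
    ∃ i : Fin n, W' ⊆ (K.std {j | j ≠ i} : Set W) :=
  stmt_7_general K h hC W' hone G hG hexp hproper
end
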